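/- Let q = x_0x_4 + x_1x_3 + x_2² ∈ ℂ[x_0,…,x_4] and let f ∈ ℂ[x_0,…,x_4] be homogeneous of degree 3. Then the following are equivalent: (A) there exist an invertible 5×5 complex matrix M with q∘M = q, integers u ≥ v ≥ 0 not both zero, and a homogeneous linear form ℓ such that every monomial x_0^{a_0}⋯x_4^{a_4} appearing with nonzero coefficient in f∘M + q·ℓ satisfies (a_0 − a_4)·u + (a_1 − a_3)·v ≤ 0; (B) there exist an invertible 5×5 complex matrix M with q∘M = q and a homogeneous linear form ℓ such that every monomial appearing with nonzero coefficient in g := f∘M + q·ℓ lies in one of the following three lists: (i) the degree-3 monomials in x_1, x_2, x_3, x_4 only (i.e. g = c(x_1,x_2,x_3,x_4)); (ii) { x_0x_2x_3, x_0x_3², x_1x_2x_3, x_1x_2x_4, x_1x_3², x_1x_3x_4, x_1x_4² } together with all degree-3 monomials in x_2, x_3, x_4 (i.e. g = x_0x_3·l(x_2,x_3) + x_1x_2·l₁(x_3,x_4) + x_1·q′(x_3,x_4) + c(x_2,x_3,x_4)); (iii) { x_0x_3², x_1x_2x_3, x_1x_3², x_1²x_4, x_1x_2x_4, x_1x_3x_4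 } together with all degree-3 monomials in x_2, x_3, x_4 (i.e. g = λ·x_0x_3² + x_1x_3·l₁(x_2,x_3) + x_1x_4·l₂(x_1,x_2,x_3) + c(x_2,x_3,x_4)). Condition (A) is the Hilbert–Mumford numerical criterion for the cubic section X = Q ∩ {f = 0} of the smooth quadric threefold Q to be not properly stable for the SO(Q)(ℂ)-action. -/

import Mathlib

open MvPolynomial

/-- The quadric form `q = x_0x_4 + x_1x_3 + x_2²` defining the smooth quadric threefold. -/
noncomputable def quadQ : MvPolynomial (Fin 5) ℂ := X 0 * X 4 + X 1 * X 3 + X 2 ^ 2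

/-- Composition `p ∘ M` of a polynomial with the linear change of coordinates given by a
matrix `M`, i.e. the substitution `x_i ↦ ∑_j M_{ij} x_j`. -/
noncomputable def compMat (M : Matrix (Fin 5) (Fin 5) ℂ) (p : MvPolynomial (Fin 5) ℂ) :
    MvPolynomial (Fin 5) ℂ :=
  MvPolynomial.bind₁ (fun i => ∑ j, MvPolynomial.C (M i j) * MvPolynomial.X j) p

/-- Exponent vector of the cubic monomial `x_i x_j x_k`. -/
noncomputable def mon3 (i j k : Fin 5) : Fin 5 →₀ ℕ :=
  Finsupp.single i 1 + Finsupp.single j 1 + Finsupp.single k 1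

/-!
Write `wt_{u,v}` for the `λ_{u,v}`-weight of a monomial. As `q` has weight `0`, subtracting
`q·ℓ` for a suitable linear `ℓ` removes all monomials divisible by `x_0x_4` and keeps all weights
non-positive. For the remaining cubic monomials,
`wt_{u,v} = (u - v)·wt_{1,0} + v·wt_{1,1} = (u - 2v)·wt_{1,0} + v·wt_{2,1}` gives: if `v = 0`,
then `wt_{1,0} ≤ 0`; if `v > 0`, then `wt_{1,1} ≤ 0` except for `x_1²x_4`, whose presence forces
`u ≥ 2v` and hence `wt_{2,1} ≤ 0`. The monomials without `x_0x_4` of non-positive weight for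
`λ_{1,0}`, `λ_{1,1}`, `λ_{2,1}` are exactly those of (i), (ii), and (iii) plus `x_1x_4²`. In
the last case the element `x_0 ↦ x_0 - t x_3`, `x_1 ↦ x_1 + t x_4` of `O(q)`, which does not raise
`λ_{2,1}`-weights, removes `x_1x_4²` for a suitable `t`. Conversely, `λ_{1,0}`, `λ_{1,1}` and
`λ_{2,1}` destabilise the three normal forms.
-/

open Finsupp (weight)

namespace MvPolynomial

variable {σ τ ι R : Type*} [CommSemiring R]

variable (R) in
noncomputable def restrictWeight (w : σ → ℤ) (c : ℤ) : Submodule R (MvPolynomial σ R) :=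
  restrictSupport R {d | weight w d ≤ c}

variable {w : σ → ℤ} {a b c : ℤ} {p q : MvPolynomial σ R}

theorem mem_restrictWeight :
    p ∈ restrictWeight R w c ↔ ∀ d ∈ p.support, weight w d ≤ c := by
  simp [restrictWeight, mem_restrictSupport_iff, Set.subset_def]

theorem coeff_eq_zero_of_mem_restrictWeight (hp : p ∈ restrictWeight R w c) {d : σ →₀ ℕ}
    (hd : c < weight w d) : coeff d p = 0 :=
  notMem_support_iff.1 fun h => (mem_restrictWeight.1 hp d h).not_gt hd

theorem restrictWeight_mono (h : a ≤ b) : restrictWeight R w a ≤ restrictWeight R w b :=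
  restrictSupport_mono R fun _ hd => le_trans hd h

theorem monomial_mem_restrictWeight (d : σ →₀ ℕ) (r : R) :
    monomial d r ∈ restrictWeight R w (weight w d) :=
  (monomial_mem_restrictSupport R).2 (Or.inl (le_refl (weight w d)))

theorem one_mem_restrictWeight : (1 : MvPolynomial σ R) ∈ restrictWeight R w 0 := by
  simpa using monomial_mem_restrictWeight (R := R) (w := w) 0 1

theorem X_mem_restrictWeight (i : σ) : (X i : MvPolynomial σ R) ∈ restrictWeight R w (w i) := by
  simpa [X, Finsupp.weight_single] using
    monomial_mem_restrictWeight (R := R) (w := w) (Finsupp.single i 1) 1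

theorem mul_mem_restrictWeight (hp : p ∈ restrictWeight R w a) (hq : q ∈ restrictWeight R w b) :
    p * q ∈ restrictWeight R w (a + b) := by
  classical
  rw [mem_restrictWeight] at hp hq ⊢
  intro d hd
  obtain ⟨d₁, hd₁, d₂, hd₂, rfl⟩ := Finset.mem_add.1 (support_mul p q hd)
  rw [map_add]
  exact add_le_add (hp d₁ hd₁) (hq d₂ hd₂)

theorem pow_mem_restrictWeight (hp : p ∈ restrictWeight R w a) (n : ℕ) :
    p ^ n ∈ restrictWeight R w (n • a) := by
  induction n with
  | zero => simpa using one_mem_restrictWeight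
  | succ n ih => simpa [pow_succ, add_one_mul] using mul_mem_restrictWeight ih hp

theorem prod_mem_restrictWeight (s : Finset ι) {f : ι → MvPolynomial σ R} {c : ι → ℤ}
    (h : ∀ i ∈ s, f i ∈ restrictWeight R w (c i)) :
    ∏ i ∈ s, f i ∈ restrictWeight R w (∑ i ∈ s, c i) := by
  classical
  induction s using Finset.induction_on with
  | empty => simpa using one_mem_restrictWeight
  | insert i s hi ih =>
    rw [Finset.prod_insert hi, Finset.sum_insert hi]
    exact mul_mem_restrictWeight (h i (s.mem_insert_self i))
      (ih fun j hj => h j (Finset.mem_insert_of_mem hj))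

theorem bind₁_mem_restrictWeight {w' : τ → ℤ} {φ : σ → MvPolynomial τ R}
    (hφ : ∀ i, φ i ∈ restrictWeight R w' (w i)) (hp : p ∈ restrictWeight R w c) :
    bind₁ φ p ∈ restrictWeight R w' c := by
  rw [p.as_sum, map_sum]
  refine Submodule.sum_mem _ fun d hd => ?_
  rw [bind₁_monomial, C_mul']
  refine Submodule.smul_mem _ _ (restrictWeight_mono ?_ (prod_mem_restrictWeight _
    fun i _ => pow_mem_restrictWeight (hφ i) (d i)))
  simpa [Finsupp.weight_apply, Finsupp.sum] using mem_restrictWeight.1 hp d hd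

theorem IsHomogeneous.degree_eq_of_mem_support {n : ℕ} (hp : p.IsHomogeneous n)
    {d : σ →₀ ℕ} (hd : d ∈ p.support) : d.degree = n := by
  by_contra h
  exact mem_support_iff.1 hd (hp.coeff_eq_zero h)

end MvPolynomial

theorem Finsupp.ext_iff_fin_five {d e : Fin 5 →₀ ℕ} :
    d = e ↔ d 0 = e 0 ∧ d 1 = e 1 ∧ d 2 = e 2 ∧ d 3 = e 3 ∧ d 4 = e 4 := by
  simp [Finsupp.ext_iff, Fin.forall_fin_succ]

theorem Finsupp.degree_eq_sum_fin_five (d : Fin 5 →₀ ℕ) :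
    d.degree = d 0 + d 1 + d 2 + d 3 + d 4 := by
  rw [Finsupp.degree_eq_sum, Fin.sum_univ_five]

theorem Finsupp.weight_fin_five (w : Fin 5 → ℤ) (d : Fin 5 →₀ ℕ) :
    weight w d = d 0 * w 0 + d 1 * w 1 + d 2 * w 2 + d 3 * w 3 + d 4 * w 4 := by
  simp [Finsupp.weight_apply, Finsupp.sum_fintype, Fin.sum_univ_five]

theorem mon3_apply (i j k l : Fin 5) :
    mon3 i j k l =
      (if i = l then 1 else 0) + (if j = l then 1 else 0) + (if k = l then 1 else 0) := by
  simp [mon3, Finsupp.single_apply]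

theorem monomial_mon3 (i j k : Fin 5) (a : ℂ) :
    monomial (mon3 i j k) a = C a * X i * X j * X k := by
  rw [mon3, monomial_add_single, monomial_add_single, ← C_mul_X_eq_monomial, pow_one, pow_one]

/-- The weights of `x_0, …, x_4` under the one-parameter subgroup `λ_{u,v}`. -/
def torusWeight (u v : ℤ) : Fin 5 → ℤ := ![u, v, 0, -v, -u]

theorem weight_torusWeight (u v : ℤ) (d : Fin 5 →₀ ℕ) :
    weight (torusWeight u v) d = ((d 0 : ℤ) - d 4) * u + ((d 1 : ℤ) - d 3) * v := by
  rw [Finsupp.weight_fin_five]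
  simp only [torusWeight, Matrix.cons_val]
  ring

theorem mem_restrictWeight_torusWeight {u v c : ℤ} {p : MvPolynomial (Fin 5) ℂ} :
    p ∈ restrictWeight ℂ (torusWeight u v) c ↔
      ∀ d ∈ p.support, ((d 0 : ℤ) - d 4) * u + ((d 1 : ℤ) - d 3) * v ≤ c := by
  simp only [mem_restrictWeight, weight_torusWeight]

theorem quadQ_mem_restrictWeight (u v : ℤ) :
    quadQ ∈ restrictWeight ℂ (torusWeight u v) 0 := by
  have hX (i : Fin 5) := X_mem_restrictWeight (R := ℂ) (w := torusWeight u v) i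
  have h04 := mul_mem_restrictWeight (hX 0) (hX 4)
  have h13 := mul_mem_restrictWeight (hX 1) (hX 3)
  have h22 := pow_mem_restrictWeight (hX 2) 2
  simp only [torusWeight, Matrix.cons_val, add_neg_cancel, smul_zero] at h04 h13 h22
  exact add_mem (add_mem h04 h13) h22

section Monomials

variable {d : Fin 5 →₀ ℕ} {u v : ℤ}

def IsTypeIIMonomial (d : Fin 5 →₀ ℕ) : Prop :=
  d = mon3 0 2 3 ∨ d = mon3 0 3 3 ∨ d = mon3 1 2 3 ∨ d = mon3 1 2 4 ∨
    d = mon3 1 3 3 ∨ d = mon3 1 3 4 ∨ d = mon3 1 4 4 ∨ (d 0 = 0 ∧ d 1 = 0)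

def IsTypeIIIMonomial (d : Fin 5 →₀ ℕ) : Prop :=
  d = mon3 0 3 3 ∨ d = mon3 1 2 3 ∨ d = mon3 1 3 3 ∨ d = mon3 1 1 4 ∨
    d = mon3 1 2 4 ∨ d = mon3 1 3 4 ∨ (d 0 = 0 ∧ d 1 = 0)

theorem weight_nonpos_of_isTypeIIMonomial (h : IsTypeIIMonomial d) :
    weight (torusWeight 1 1) d ≤ 0 := by
  rw [weight_torusWeight]
  rcases h with rfl | rfl | rfl | rfl | rfl | rfl | rfl | ⟨h0, h1⟩ <;> simp [mon3_apply, *]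

theorem weight_nonpos_of_isTypeIIIMonomial (h : IsTypeIIIMonomial d) :
    weight (torusWeight 2 1) d ≤ 0 := by
  rw [weight_torusWeight]
  rcases h with rfl | rfl | rfl | rfl | rfl | rfl | ⟨h0, h1⟩ <;> simp [mon3_apply, *]
  omega

theorem isTypeIIMonomial_of_weight_nonpos (hdeg : d.degree = 3) (hfree : d 0 = 0 ∨ d 4 = 0)
    (h : weight (torusWeight 1 1) d ≤ 0) : IsTypeIIMonomial d := by
  rw [Finsupp.degree_eq_sum_fin_five] at hdeg
  rw [weight_torusWeight] at h
  obtain ⟨h0, h1⟩ | ⟨h0, h1⟩ | ⟨h0, h1⟩ :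
      (d 0 = 0 ∧ d 1 = 0) ∨ (d 0 = 1 ∧ d 1 = 0) ∨ (d 0 = 0 ∧ d 1 = 1) := by omega
  all_goals simp [IsTypeIIMonomial, Finsupp.ext_iff_fin_five, mon3_apply, h0, h1]
  all_goals omega

theorem isTypeIIIMonomial_of_weight_nonpos (hdeg : d.degree = 3) (hfree : d 0 = 0 ∨ d 4 = 0)
    (h : weight (torusWeight 2 1) d ≤ 0) (hne : d ≠ mon3 1 4 4) : IsTypeIIIMonomial d := by
  rw [Finsupp.degree_eq_sum_fin_five] at hdeg
  rw [weight_torusWeight] at h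
  rw [Ne, Finsupp.ext_iff_fin_five] at hne
  simp only [mon3_apply] at hne
  obtain ⟨h0, h1⟩ | ⟨h0, h1⟩ | ⟨h0, h1⟩ | ⟨h0, h1⟩ :
      (d 0 = 0 ∧ d 1 = 0) ∨ (d 0 = 1 ∧ d 1 = 0) ∨ (d 0 = 0 ∧ d 1 = 1) ∨
        (d 0 = 0 ∧ d 1 = 2) := by
    omega
  all_goals simp [IsTypeIIIMonomial, Finsupp.ext_iff_fin_five, mon3_apply, h0, h1] at hne ⊢
  all_goals omega

theorem eq_zero_of_weight_torusWeight_nonpos (hu : 0 < u) (hfree : d 0 = 0 ∨ d 4 = 0)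
    (h : weight (torusWeight u 0) d ≤ 0) : d 0 = 0 := by
  rw [weight_torusWeight, mul_zero, add_zero] at h
  have : (d 0 : ℤ) ≤ d 4 := by nlinarith
  omega

theorem weight_torusWeight_one_one_nonpos (hdeg : d.degree = 3) (hvu : v ≤ u) (hv : 0 < v)
    (h : weight (torusWeight u v) d ≤ 0) (hne : d ≠ mon3 1 1 4) :
    weight (torusWeight 1 1) d ≤ 0 := by
  rw [Finsupp.degree_eq_sum_fin_five] at hdeg
  rw [weight_torusWeight] at h ⊢
  rw [Ne, Finsupp.ext_iff_fin_five] at hne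
  simp only [mon3_apply, Fin.reduceEq, ↓reduceIte, Nat.reduceAdd] at hne
  by_contra! hpos
  -- `wt_{u,v} = (u - v)·wt_{1,0} + v·wt_{1,1}`
  have : (d 0 : ℤ) < d 4 := by
    by_contra! h04
    nlinarith [mul_nonneg (sub_nonneg.2 hvu) (sub_nonneg.2 h04)]
  omega

theorem weight_torusWeight_two_one_nonpos (hdeg : d.degree = 3) (h2v : 2 * v ≤ u) (hv : 0 < v)
    (h : weight (torusWeight u v) d ≤ 0) :
    weight (torusWeight 2 1) d ≤ 0 := by
  rw [Finsupp.degree_eq_sum_fin_five] at hdeg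
  rw [weight_torusWeight] at h ⊢
  by_contra! hpos
  -- `wt_{u,v} = (u - 2v)·wt_{1,0} + v·wt_{2,1}`
  have : (d 0 : ℤ) < d 4 := by
    by_contra! h04
    nlinarith [mul_nonneg (sub_nonneg.2 h2v) (sub_nonneg.2 h04)]
  omega

end Monomials

theorem compMat_X (M : Matrix (Fin 5) (Fin 5) ℂ) (i : Fin 5) :
    compMat M (X i) = ∑ j, C (M i j) * X j :=
  bind₁_X_right _ _

theorem compMat_eq_bind₁ (M : Matrix (Fin 5) (Fin 5) ℂ) (p : MvPolynomial (Fin 5) ℂ) :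
    compMat M p = bind₁ (fun i => compMat M (X i)) p := by
  simp only [compMat_X]
  rfl

theorem compMat_add (M : Matrix (Fin 5) (Fin 5) ℂ) (p q : MvPolynomial (Fin 5) ℂ) :
    compMat M (p + q) = compMat M p + compMat M q :=
  map_add _ p q

theorem compMat_compMat (M N : Matrix (Fin 5) (Fin 5) ℂ) (p : MvPolynomial (Fin 5) ℂ) :
    compMat N (compMat M p) = compMat (M * N) p := by
  have h (i : Fin 5) : compMat N (∑ j, C (M i j) * X j) = ∑ j, C ((M * N) i j) * X j := by
    simp only [compMat, map_sum, map_mul, bind₁_X_right, bind₁_C_right, Finset.mul_sum,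
      Matrix.mul_apply, Finset.sum_mul, map_sum]
    rw [Finset.sum_comm]
    simp only [mul_assoc]
  simp only [compMat, bind₁_bind₁]
  exact congrArg (bind₁ · p) (funext h)

theorem compMat_isHomogeneous (M : Matrix (Fin 5) (Fin 5) ℂ) {p : MvPolynomial (Fin 5) ℂ}
    {n : ℕ} (hp : p.IsHomogeneous n) : (compMat M p).IsHomogeneous n := by
  have := hp.aeval (fun i => ∑ j, C (M i j) * X j) fun i =>
    IsHomogeneous.sum _ _ _ fun j _ => isHomogeneous_C_mul_X (M i j) j
  rw [compMat, bind₁]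
  simpa using this

theorem quadQ_isHomogeneous : quadQ.IsHomogeneous 2 :=
  (((isHomogeneous_X _ _).mul (isHomogeneous_X _ _)).add
    ((isHomogeneous_X _ _).mul (isHomogeneous_X _ _))).add (isHomogeneous_X_pow _ _)

/-- `g` represents, modulo `q`, the image of `f` under an element of `O(q)`. -/
def IsOrbitRep (f g : MvPolynomial (Fin 5) ℂ) : Prop :=
  ∃ M : Matrix (Fin 5) (Fin 5) ℂ, IsUnit M ∧ compMat M quadQ = quadQ ∧
    ∃ ℓ : MvPolynomial (Fin 5) ℂ, ℓ.IsHomogeneous 1 ∧ g = compMat M f + quadQ * ℓ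

namespace IsOrbitRep

variable {f g : MvPolynomial (Fin 5) ℂ}

theorem isHomogeneous (hf : f.IsHomogeneous 3) (h : IsOrbitRep f g) : g.IsHomogeneous 3 := by
  obtain ⟨M, -, -, ℓ, hℓ, rfl⟩ := h
  exact (compMat_isHomogeneous M hf).add (quadQ_isHomogeneous.mul hℓ)

theorem sub_quadQ_mul (h : IsOrbitRep f g) {L : MvPolynomial (Fin 5) ℂ}
    (hL : L.IsHomogeneous 1) :
    IsOrbitRep f (g - quadQ * L) := by
  obtain ⟨M, hM, hMq, ℓ, hℓ, rfl⟩ := h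
  exact ⟨M, hM, hMq, ℓ - L, hℓ.sub hL, by ring⟩

theorem compMat (h : IsOrbitRep f g) {N : Matrix (Fin 5) (Fin 5) ℂ} (hN : IsUnit N)
    (hNq : _root_.compMat N quadQ = quadQ) : IsOrbitRep f (_root_.compMat N g) := by
  obtain ⟨M, hM, hMq, ℓ, hℓ, rfl⟩ := h
  refine ⟨M * N, hM.mul hN, by rw [← compMat_compMat, hMq, hNq], _root_.compMat N ℓ,
    compMat_isHomogeneous N hℓ, ?_⟩
  conv_rhs => rw [← hNq, ← compMat_compMat]
  simp only [_root_.compMat, map_add, map_mul]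

end IsOrbitRep

def IsX0X4Free (p : MvPolynomial (Fin 5) ℂ) : Prop :=
  ∀ d ∈ p.support, d 0 = 0 ∨ d 4 = 0

/-- Use `x_0x_4 = q - x_1x_3 - x_2²` to remove the monomials divisible by `x_0x_4`. -/
noncomputable def eliminateX0X4 (g : MvPolynomial (Fin 5) ℂ) : MvPolynomial (Fin 5) ℂ :=
  g - quadQ * ∑ k, C (coeff (mon3 0 4 k) g) * X k

theorem quadQ_mul_C_mul_X (a : ℂ) (k : Fin 5) :
    quadQ * (C a * X k)
      = monomial (mon3 0 4 k) a + monomial (mon3 1 3 k) a + monomial (mon3 2 2 k) a := by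
  rw [quadQ, monomial_mon3, monomial_mon3, monomial_mon3]
  ring

theorem coeff_quadQ_mul_linear (c : Fin 5 → ℂ) (d : Fin 5 →₀ ℕ) :
    coeff d (quadQ * ∑ k, C (c k) * X k) = ∑ k, ((if mon3 0 4 k = d then c k else 0) +
      (if mon3 1 3 k = d then c k else 0) + (if mon3 2 2 k = d then c k else 0)) := by
  simp only [Finset.mul_sum, quadQ_mul_C_mul_X, coeff_sum, coeff_add, coeff_monomial]

theorem exists_eq_mon3_zero_four {d : Fin 5 →₀ ℕ} (hdeg : d.degree = 3) (h0 : d 0 ≠ 0)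
    (h4 : d 4 ≠ 0) : ∃ k, d = mon3 0 4 k := by
  rw [Finsupp.degree_eq_sum_fin_five] at hdeg
  rcases (by omega : d 0 = 2 ∨ d 1 = 1 ∨ d 2 = 1 ∨ d 3 = 1 ∨ d 4 = 2) with h | h | h | h | h <;>
    [use 0; use 1; use 2; use 3; use 4] <;>
    simp only [Finsupp.ext_iff_fin_five, mon3_apply, Fin.reduceEq, ↓reduceIte, Nat.reduceAdd] <;>
    omega

theorem isHomogeneous_eliminateX0X4 {g : MvPolynomial (Fin 5) ℂ} (hg : g.IsHomogeneous 3) :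
    (eliminateX0X4 g).IsHomogeneous 3 :=
  hg.sub <| quadQ_isHomogeneous.mul <|
    IsHomogeneous.sum _ _ _ fun k _ => isHomogeneous_C_mul_X _ k

theorem isX0X4Free_eliminateX0X4 {g : MvPolynomial (Fin 5) ℂ} (hg : g.IsHomogeneous 3) :
    IsX0X4Free (eliminateX0X4 g) := by
  intro d hd
  by_contra! h
  obtain ⟨k, rfl⟩ := exists_eq_mon3_zero_four
    ((isHomogeneous_eliminateX0X4 hg).degree_eq_of_mem_support hd) h.1 h.2
  apply mem_support_iff.1 hd
  rw [eliminateX0X4, coeff_sub, coeff_quadQ_mul_linear]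
  fin_cases k <;> simp [Fin.sum_univ_five, Finsupp.ext_iff_fin_five, mon3_apply]

theorem coeff_x1x4sq_eliminateX0X4 (g : MvPolynomial (Fin 5) ℂ) :
    coeff (mon3 1 4 4) (eliminateX0X4 g) = coeff (mon3 1 4 4) g := by
  rw [eliminateX0X4, coeff_sub, coeff_quadQ_mul_linear]
  simp [Finsupp.ext_iff_fin_five, mon3_apply]

theorem weight_mon3_zero_four (u v : ℤ) (k : Fin 5) :
    weight (torusWeight u v) (mon3 0 4 k) = torusWeight u v k := by
  simp [mon3, Finsupp.weight_single, torusWeight]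

theorem eliminateX0X4_mem_restrictWeight {g : MvPolynomial (Fin 5) ℂ} {u v c : ℤ}
    (hg : g ∈ restrictWeight ℂ (torusWeight u v) c) :
    eliminateX0X4 g ∈ restrictWeight ℂ (torusWeight u v) c := by
  have hL : ∑ k, C (coeff (mon3 0 4 k) g) * X k ∈ restrictWeight ℂ (torusWeight u v) c := by
    refine Submodule.sum_mem _ fun k _ => ?_
    by_cases hk : coeff (mon3 0 4 k) g = 0
    · rw [hk, C_0, zero_mul]
      exact zero_mem _
    rw [C_mul']
    refine Submodule.smul_mem _ _ (restrictWeight_mono ?_ (X_mem_restrictWeight k))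
    rw [← weight_mon3_zero_four]
    exact mem_restrictWeight.1 hg _ (mem_support_iff.2 hk)
  have := mul_mem_restrictWeight (quadQ_mem_restrictWeight u v) hL
  rw [zero_add] at this
  exact sub_mem hg this

theorem IsOrbitRep.eliminateX0X4 {f g : MvPolynomial (Fin 5) ℂ} (h : IsOrbitRep f g) :
    IsOrbitRep f (eliminateX0X4 g) :=
  h.sub_quadQ_mul (IsHomogeneous.sum _ _ _ fun k _ => isHomogeneous_C_mul_X _ k)

/-- The unipotent element `x_0 ↦ x_0 - t x_3`, `x_1 ↦ x_1 + t x_4` of `O(q)`. -/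
noncomputable def shear (t : ℂ) : Matrix (Fin 5) (Fin 5) ℂ :=
  1 + Matrix.single 0 3 (-t) + Matrix.single 1 4 t

theorem isUnit_shear (t : ℂ) : IsUnit (shear t) := by
  refine (Matrix.isUnit_iff_isUnit_det _).2
    (Matrix.isUnit_det_of_right_inverse (B := shear (-t)) ?_)
  ext i j
  fin_cases i <;> fin_cases j <;>
    simp [shear, Matrix.mul_apply, Fin.sum_univ_five, Matrix.one_apply, Matrix.single]

theorem compMat_shear_X (t : ℂ) (i : Fin 5) :
    compMat (shear t) (X i) = X i + ![-(C t * X 3), C t * X 4, 0, 0, 0] i := by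
  rw [compMat_X]
  fin_cases i <;> simp [shear, Fin.sum_univ_five, Matrix.one_apply, Matrix.single]

theorem compMat_shear_quadQ (t : ℂ) : compMat (shear t) quadQ = quadQ := by
  rw [compMat_eq_bind₁]
  simp only [quadQ, map_add, map_mul, map_pow, bind₁_X_right, compMat_shear_X, Matrix.cons_val]
  ring

theorem compMat_shear_mem_restrictWeight {w : Fin 5 → ℤ} (h03 : w 3 ≤ w 0) (h14 : w 4 ≤ w 1)
    (t : ℂ) {p : MvPolynomial (Fin 5) ℂ} {c : ℤ} (hp : p ∈ restrictWeight ℂ w c) :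
    compMat (shear t) p ∈ restrictWeight ℂ w c := by
  refine bind₁_mem_restrictWeight (fun i => ?_) hp
  rw [← compMat_X, compMat_shear_X]
  refine add_mem (X_mem_restrictWeight i) ?_
  fin_cases i
  · simpa [C_mul'] using
      Submodule.smul_mem _ t (restrictWeight_mono h03 (X_mem_restrictWeight 3))
  · simpa [C_mul'] using
      Submodule.smul_mem _ t (restrictWeight_mono h14 (X_mem_restrictWeight 4))
  all_goals exact zero_mem _

theorem compMat_shear_monomial_x1sqx4 (t a : ℂ) :
    compMat (shear t) (monomial (mon3 1 1 4) a) = monomial (mon3 1 1 4) a +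
      monomial (mon3 1 4 4) (2 * t * a) + monomial (mon3 4 4 4) (t ^ 2 * a) := by
  rw [compMat_eq_bind₁]
  simp only [monomial_mon3, map_mul, bind₁_C_right, bind₁_X_right, compMat_shear_X,
    Matrix.cons_val, C_pow, map_ofNat]
  ring

theorem compMat_shear_monomial_x1x4sq (t b : ℂ) :
    compMat (shear t) (monomial (mon3 1 4 4) b) =
      monomial (mon3 1 4 4) b + monomial (mon3 4 4 4) (t * b) := by
  rw [compMat_eq_bind₁]
  simp only [monomial_mon3, map_mul, bind₁_C_right, bind₁_X_right, compMat_shear_X,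
    Matrix.cons_val]
  ring

theorem weight_le_three_of_ne_x1sqx4_of_ne_x1x4sq {d : Fin 5 →₀ ℕ} (hdeg : d.degree = 3)
    (h : weight (torusWeight 2 1) d ≤ 0) (h114 : d ≠ mon3 1 1 4) (h144 : d ≠ mon3 1 4 4) :
    weight (![0, 2, 0, 0, 1] : Fin 5 → ℤ) d ≤ 3 := by
  rw [Finsupp.degree_eq_sum_fin_five] at hdeg
  rw [weight_torusWeight] at h
  rw [Ne, Finsupp.ext_iff_fin_five] at h114 h144
  simp only [mon3_apply, Fin.reduceEq, ↓reduceIte, Nat.reduceAdd] at h114 h144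
  rw [Finsupp.weight_fin_five]
  simp only [Matrix.cons_val]
  omega

/-- The shear only lowers the weight `2 deg_{x_1} + deg_{x_4}`, so the coefficient of `x_1x_4²`
in the image only receives contributions from `x_1²x_4` and `x_1x_4²`. -/
theorem coeff_x1x4sq_compMat_shear {g : MvPolynomial (Fin 5) ℂ} (hg : g.IsHomogeneous 3)
    (hw : g ∈ restrictWeight ℂ (torusWeight 2 1) 0) (t : ℂ) :
    coeff (mon3 1 4 4) (compMat (shear t) g) =
      coeff (mon3 1 4 4) g + 2 * t * coeff (mon3 1 1 4) g := by
  set a := coeff (mon3 1 1 4) g with ha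
  set b := coeff (mon3 1 4 4) g with hb
  set r := g - monomial (mon3 1 1 4) a - monomial (mon3 1 4 4) b with hr
  have hne : mon3 1 1 4 ≠ mon3 1 4 4 := by simp [Finsupp.ext_iff_fin_five, mon3_apply]
  have hcoeff (d : Fin 5 →₀ ℕ) : coeff d r =
      coeff d g - (if mon3 1 1 4 = d then a else 0) - (if mon3 1 4 4 = d then b else 0) := by
    simp only [hr, coeff_sub, coeff_monomial]
  have hrw : r ∈ restrictWeight ℂ (![0, 2, 0, 0, 1] : Fin 5 → ℤ) 3 := by
    refine mem_restrictWeight.2 fun d hd => ?_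
    have h114 : d ≠ mon3 1 1 4 := by
      rintro rfl
      simp [hcoeff, hne.symm, ← ha] at hd
    have h144 : d ≠ mon3 1 4 4 := by
      rintro rfl
      simp [hcoeff, hne, ← hb] at hd
    have hdg : d ∈ g.support := by
      simpa [hcoeff, Ne.symm h114, Ne.symm h144] using hd
    exact weight_le_three_of_ne_x1sqx4_of_ne_x1x4sq (hg.degree_eq_of_mem_support hdg)
      (mem_restrictWeight.1 hw d hdg) h114 h144
  have hr0 : coeff (mon3 1 4 4) (compMat (shear t) r) = 0 :=
    coeff_eq_zero_of_mem_restrictWeight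
      (compMat_shear_mem_restrictWeight (by simp) (by simp) t hrw)
      (by simp [Finsupp.weight_fin_five, mon3_apply])
  have hsplit : compMat (shear t) g = compMat (shear t) (monomial (mon3 1 1 4) a) +
      compMat (shear t) (monomial (mon3 1 4 4) b) + compMat (shear t) r := by
    rw [← compMat_add, ← compMat_add, hr]
    congr 1
    ring
  rw [hsplit, coeff_add, coeff_add, hr0, compMat_shear_monomial_x1sqx4,
    compMat_shear_monomial_x1x4sq]
  have h444 : mon3 4 4 4 ≠ mon3 1 4 4 := by simp [Finsupp.ext_iff_fin_five, mon3_apply]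
  simp only [coeff_add, coeff_monomial, hne, h444, ↓reduceIte]
  ring

theorem exists_isOrbitRep_isTypeIIIMonomial {f g : MvPolynomial (Fin 5) ℂ}
    (hf : f.IsHomogeneous 3) (hg : IsOrbitRep f g)
    (hw : g ∈ restrictWeight ℂ (torusWeight 2 1) 0)
    (ha : coeff (mon3 1 1 4) g ≠ 0) :
    ∃ g', IsOrbitRep f g' ∧ ∀ d ∈ g'.support, IsTypeIIIMonomial d := by
  set t := -coeff (mon3 1 4 4) g / (2 * coeff (mon3 1 1 4) g) with ht
  have hsg := hg.compMat (isUnit_shear t) (compMat_shear_quadQ t)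
  have hsw :=
    compMat_shear_mem_restrictWeight (by simp [torusWeight]) (by simp [torusWeight]) t hw
  refine ⟨_, hsg.eliminateX0X4, fun d hd => ?_⟩
  have h144 : coeff (mon3 1 4 4) (eliminateX0X4 (compMat (shear t) g)) = 0 := by
    rw [coeff_x1x4sq_eliminateX0X4, coeff_x1x4sq_compMat_shear (hg.isHomogeneous hf) hw,
      ht]
    field_simp
    ring
  exact isTypeIIIMonomial_of_weight_nonpos
    ((hsg.eliminateX0X4.isHomogeneous hf).degree_eq_of_mem_support hd)
    (isX0X4Free_eliminateX0X4 (hsg.isHomogeneous hf) d hd)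
    (mem_restrictWeight.1 (eliminateX0X4_mem_restrictWeight hsw) d hd)
    (by rintro rfl; exact mem_support_iff.1 hd h144)

theorem exists_isOrbitRep_normalForm {f g : MvPolynomial (Fin 5) ℂ} {u v : ℤ}
    (hf : f.IsHomogeneous 3) (hg : IsOrbitRep f g) (hvu : v ≤ u) (hv : 0 ≤ v) (hu : 0 < u)
    (hw : g ∈ restrictWeight ℂ (torusWeight u v) 0) :
    ∃ g', IsOrbitRep f g' ∧ ((∀ d ∈ g'.support, d 0 = 0) ∨
      (∀ d ∈ g'.support, IsTypeIIMonomial d) ∨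
      ∀ d ∈ g'.support, IsTypeIIIMonomial d) := by
  set r := eliminateX0X4 g
  have hr : IsOrbitRep f r := hg.eliminateX0X4
  have hdeg {d} (hd : d ∈ r.support) : d.degree = 3 :=
    (hr.isHomogeneous hf).degree_eq_of_mem_support hd
  have hfree : IsX0X4Free r := isX0X4Free_eliminateX0X4 (hg.isHomogeneous hf)
  have hrw := mem_restrictWeight.1 (eliminateX0X4_mem_restrictWeight hw)
  obtain rfl | hv := hv.eq_or_lt
  · exact ⟨r, hr, Or.inl fun d hd =>
      eq_zero_of_weight_torusWeight_nonpos hu (hfree d hd) (hrw d hd)⟩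
  by_cases ha : coeff (mon3 1 1 4) r = 0
  · refine ⟨r, hr, Or.inr (Or.inl fun d hd => isTypeIIMonomial_of_weight_nonpos (hdeg hd)
      (hfree d hd) (weight_torusWeight_one_one_nonpos (hdeg hd) hvu hv (hrw d hd) ?_))⟩
    rintro rfl
    exact mem_support_iff.1 hd ha
  have h2v : 2 * v ≤ u := by
    have := hrw _ (mem_support_iff.2 ha)
    simp only [weight_torusWeight, mon3_apply, Fin.reduceEq, ↓reduceIte, Nat.reduceAdd] at this
    push_cast at this
    linarith
  obtain ⟨g', hg', hIII⟩ := exists_isOrbitRep_isTypeIIIMonomial hf hr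
    (mem_restrictWeight.2 fun d hd =>
      weight_torusWeight_two_one_nonpos (hdeg hd) h2v hv (hrw d hd)) ha
  exact ⟨g', hg', Or.inr (Or.inr hIII)⟩

/-- Hilbert–Mumford analysis of not-properly-stable cubic sections of the quadric
threefold `Q : x_0x_4 + x_1x_3 + x_2² = 0`: the numerical criterion (A) is equivalent to
normal forms (B) of types (N1), (N2), (N3). -/
theorem not_properly_stable_iff (f : MvPolynomial (Fin 5) ℂ) (hf : f.IsHomogeneous 3) :
    (∃ M : Matrix (Fin 5) (Fin 5) ℂ, IsUnit M ∧ compMat M quadQ = quadQ ∧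
      ∃ u v : ℤ, u ≥ v ∧ v ≥ 0 ∧ (u, v) ≠ (0, 0) ∧
        ∃ ℓ : MvPolynomial (Fin 5) ℂ, ℓ.IsHomogeneous 1 ∧
          ∀ d ∈ (compMat M f + quadQ * ℓ).support,
            ((d 0 : ℤ) - d 4) * u + ((d 1 : ℤ) - d 3) * v ≤ 0)
    ↔
    (∃ M : Matrix (Fin 5) (Fin 5) ℂ, IsUnit M ∧ compMat M quadQ = quadQ ∧
      ∃ ℓ : MvPolynomial (Fin 5) ℂ, ℓ.IsHomogeneous 1 ∧
        ((∀ d ∈ (compMat M f + quadQ * ℓ).support, d 0 = 0) ∨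
         (∀ d ∈ (compMat M f + quadQ * ℓ).support,
            d = mon3 0 2 3 ∨ d = mon3 0 3 3 ∨ d = mon3 1 2 3 ∨ d = mon3 1 2 4 ∨
            d = mon3 1 3 3 ∨ d = mon3 1 3 4 ∨ d = mon3 1 4 4 ∨ (d 0 = 0 ∧ d 1 = 0)) ∨
         (∀ d ∈ (compMat M f + quadQ * ℓ).support,
            d = mon3 0 3 3 ∨ d = mon3 1 2 3 ∨ d = mon3 1 3 3 ∨ d = mon3 1 1 4 ∨
            d = mon3 1 2 4 ∨ d = mon3 1 3 4 ∨ (d 0 = 0 ∧ d 1 = 0)))) := by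
  constructor
  · rintro ⟨M, hM, hMq, u, v, hvu, hv, huv, ℓ, hℓ, hw⟩
    have hu : 0 < u := by
      by_contra! hu
      exact huv (Prod.ext (by omega) (by omega))
    obtain ⟨_, ⟨M', hM', hM'q, ℓ', hℓ', rfl⟩, hnf⟩ := exists_isOrbitRep_normalForm hf
      ⟨M, hM, hMq, ℓ, hℓ, rfl⟩ hvu hv hu (mem_restrictWeight_torusWeight.2 hw)
    exact ⟨M', hM', hM'q, ℓ', hℓ', hnf⟩
  · rintro ⟨M, hM, hMq, ℓ, hℓ, hI | hII | hIII⟩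
    · exact ⟨M, hM, hMq, 1, 0, zero_le_one, le_rfl, by simp, ℓ, hℓ,
        fun d hd => by simp [hI d hd]⟩
    · refine ⟨M, hM, hMq, 1, 1, le_rfl, zero_le_one, by simp, ℓ, hℓ, fun d hd => ?_⟩
      simpa [weight_torusWeight] using weight_nonpos_of_isTypeIIMonomial (hII d hd)
    · refine ⟨M, hM, hMq, 2, 1, by norm_num, zero_le_one, by simp, ℓ, hℓ, fun d hd => ?_⟩
      simpa [weight_torusWeight] using weight_nonpos_of_isTypeIIIMonomial (hIII d hd)
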